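/- Let b(x₁,…,x_m) = Σ_{ {i,j} ∈ P} x_i·x_j, suppose {1, i} ∉ P for some index i, and suppose all marginals μ₃,…,μ_m (all except μ₁ and μ_i, after relabeling) are Dirac masses δ_{x̄_j}. Then the Kantorovich functional γ ↦ ∫ b dγ takes the same value on every measure γ with the prescribed marginals; consequently, if μ_i is not a Dirac mass and μ₁ is absolutely continuous, problem (KP) admits non-Monge solutions and non-unique solutions. -/

import Mathlib

set_option maxHeartbeats 1000000


open MeasureTheory
open scoped RealInnerProductSpace Classical
open Finset

/-- The surplus function `b(x₁,…,x_m) = ∑_{{v_s,v_t} ∈ E(G)} x_s ⋅ x_t` associated to a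
graph `G` on vertices `{1,…,m}`. -/
noncomputable def surplus {d m : ℕ} (G : SimpleGraph (Fin m))
    (x : Fin m → EuclideanSpace ℝ (Fin d)) : ℝ :=
  ∑ e ∈ G.edgeFinset,
    Sym2.lift ⟨fun s t => ⟪x s, x t⟫, fun s t => real_inner_comm (x t) (x s)⟩ e

section Aux

variable {d : ℕ}

local notation "E" => EuclideanSpace ℝ (Fin d)

/-- A probability measure giving full mass to a singleton is the Dirac mass. -/
lemma eq_dirac_of_singleton_full {α : Type*} [MeasurableSpace α]
    [MeasurableSingletonClass α] (μ : Measure α) [IsProbabilityMeasure μ] {p : α}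
    (h : μ {p} = 1) : μ = Measure.dirac p := by
  ext s hs
  rw [Measure.dirac_apply' _ hs]
  by_cases hps : p ∈ s
  · simp only [Set.indicator_of_mem hps, Pi.one_apply]
    refine le_antisymm (prob_le_one (μ := μ)) ?_
    calc (1 : ENNReal) = μ {p} := h.symm
    _ ≤ μ s := measure_mono (Set.singleton_subset_iff.2 hps)
  · rw [Set.indicator_of_notMem hps]
    have h2 : μ {p}ᶜ = 0 := (prob_compl_eq_zero_iff (measurableSet_singleton p)).2 h
    exact le_antisymm (le_trans (measure_mono (Set.subset_compl_singleton_iff.2 hps)) h2.le)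
      zero_le

/-- A probability measure on Euclidean space which is not Dirac has a set of intermediate
measure. -/
lemma exists_set_of_not_dirac (μ : Measure E) [IsProbabilityMeasure μ]
    (h : ∀ p : E, μ ≠ Measure.dirac p) :
    ∃ A : Set E, MeasurableSet A ∧ 0 < μ A ∧ μ A < 1 := by
  by_contra hno
  push_neg at hno
  -- every measurable set has measure 0 or 1
  have dich : ∀ A : Set E, MeasurableSet A → μ A = 0 ∨ μ A = 1 := by
    intro A hA
    rcases eq_or_ne (μ A) 0 with h0 | h0
    · exact Or.inl h0
    · exact Or.inr (le_antisymm prob_le_one (hno A hA (pos_iff_ne_zero.2 h0)))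
  set u : ℕ → E := TopologicalSpace.denseSeq E with hu_def
  have hu : DenseRange u := TopologicalSpace.denseRange_denseSeq E
  have key : ∀ k : ℕ, ∃ n : ℕ, μ (Metric.ball (u n) (1 / (k + 1 : ℝ))) = 1 := by
    intro k
    by_contra hk
    push_neg at hk
    have hz : ∀ n, μ (Metric.ball (u n) (1 / (k + 1 : ℝ))) = 0 := by
      intro n
      rcases dich _ Metric.isOpen_ball.measurableSet with h0 | h1
      · exact h0
      · exact absurd h1 (hk n)
    have hcover : (Set.univ : Set E) ⊆ ⋃ n, Metric.ball (u n) (1 / (k + 1 : ℝ)) := by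
      intro x _
      have hpos : (0 : ℝ) < 1 / (k + 1 : ℝ) := by positivity
      obtain ⟨n, hn⟩ := hu.exists_dist_lt x hpos
      exact Set.mem_iUnion.2 ⟨n, by simpa [Metric.mem_ball, dist_comm] using hn⟩
    have : μ (Set.univ : Set E) = 0 :=
      measure_mono_null hcover (measure_iUnion_null hz)
    simp [measure_univ] at this
  choose n hn using key
  -- intersection of closed balls
  set D : Set E := ⋂ k : ℕ, Metric.closedBall (u (n k)) (1 / (k + 1 : ℝ)) with hD_def
  have hDm : ∀ k : ℕ, μ (Metric.closedBall (u (n k)) (1 / (k + 1 : ℝ))) = 1 := by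
    intro k
    refine le_antisymm (prob_le_one (μ := μ)) ?_
    calc (1 : ENNReal) = μ (Metric.ball (u (n k)) (1 / (k + 1 : ℝ))) := (hn k).symm
    _ ≤ _ := measure_mono Metric.ball_subset_closedBall
  have hD : μ D = 1 := by
    have hcompl : μ Dᶜ = 0 := by
      rw [hD_def, Set.compl_iInter]
      refine measure_iUnion_null fun k => ?_
      exact (prob_compl_eq_zero_iff Metric.isClosed_closedBall.measurableSet).2 (hDm k)
    have hDmeas : MeasurableSet D := by
      rw [hD_def]
      exact MeasurableSet.iInter fun k => Metric.isClosed_closedBall.measurableSet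
    exact (prob_compl_eq_zero_iff hDmeas).1 hcompl
  obtain ⟨p, hp⟩ : D.Nonempty := nonempty_of_measure_ne_zero (hD ▸ one_ne_zero)
  -- μ {p} = 1
  have hball : ∀ k : ℕ, μ (Metric.closedBall p (2 / (k + 1 : ℝ))) = 1 := by
    intro k
    refine le_antisymm (prob_le_one (μ := μ)) ?_
    rw [← hDm k]
    refine measure_mono fun x hx => ?_
    have hpk : dist p (u (n k)) ≤ 1 / (k + 1 : ℝ) := by
      have := Set.mem_iInter.1 hp k
      simpa [Metric.mem_closedBall] using this
    have hxk : dist x (u (n k)) ≤ 1 / (k + 1 : ℝ) := by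
      simpa [Metric.mem_closedBall] using hx
    have : dist x p ≤ dist x (u (n k)) + dist p (u (n k)) := dist_triangle_right x p (u (n k))
    have h2 : dist x p ≤ 2 / (k + 1 : ℝ) := by
      calc dist x p ≤ dist x (u (n k)) + dist p (u (n k)) := this
      _ ≤ 1 / (k + 1 : ℝ) + 1 / (k + 1 : ℝ) := add_le_add hxk hpk
      _ = 2 / (k + 1 : ℝ) := by ring
    simpa [Metric.mem_closedBall] using h2
  have hsingle : ({p} : Set E) = ⋂ k : ℕ, Metric.closedBall p (2 / (k + 1 : ℝ)) := by
    ext x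
    simp only [Set.mem_singleton_iff, Set.mem_iInter, Metric.mem_closedBall]
    constructor
    · rintro rfl k; simp only [dist_self]; positivity
    · intro hx
      by_contra hxp
      have hd : 0 < dist x p := dist_pos.2 hxp
      obtain ⟨k, hk⟩ := exists_nat_one_div_lt (show (0:ℝ) < dist x p / 2 by linarith)
      have h2k : (2 : ℝ) / (k + 1) < dist x p := by
        rw [div_lt_iff₀ (by positivity)] at hk ⊢
        nlinarith [hk]
      linarith [hx k]
  have hμp : μ {p} = 1 := by
    rw [hsingle]
    have hcompl : μ (⋂ k : ℕ, Metric.closedBall p (2 / (k + 1 : ℝ)))ᶜ = 0 := by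
      rw [Set.compl_iInter]
      exact measure_iUnion_null fun k =>
        (prob_compl_eq_zero_iff Metric.isClosed_closedBall.measurableSet).2 (hball k)
    exact (prob_compl_eq_zero_iff
      (MeasurableSet.iInter fun k => Metric.isClosed_closedBall.measurableSet)).1 hcompl
  exact h p (eq_dirac_of_singleton_full μ hμp)

/-- Integrability of the identity for a compactly supported measure. -/
lemma integrable_id_of_bdd (μ : Measure E) [IsProbabilityMeasure μ] {R : ℝ}
    (h : μ {y : E | ‖y‖ ≤ R}ᶜ = 0) : Integrable (fun y : E => y) μ := by
  have hae : ∀ᵐ y ∂μ, ‖y‖ ≤ R := by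
    rw [ae_iff]
    convert h using 2
    rfl
  exact ⟨aestronglyMeasurable_id, HasFiniteIntegral.of_bounded hae⟩


/-- A non-product coupling achieving `min (μ A) (ν B)` on `A ×ˢ B`. -/
lemma exists_min_coupling (μ ν : Measure E) [IsProbabilityMeasure μ]
    [IsProbabilityMeasure ν] {A B : Set E} (hA : MeasurableSet A) (hB : MeasurableSet B)
    (hA0 : μ A ≠ 0) (hA1 : μ A ≠ 1) (hB0 : ν B ≠ 0) (hB1 : ν B ≠ 1) :
    ∃ σ : Measure (E × E), IsProbabilityMeasure σ ∧ σ.map Prod.fst = μ ∧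
      σ.map Prod.snd = ν ∧ σ (A ×ˢ B) = min (μ A) (ν B) := by
  set a := μ A with ha_def
  set b := ν B with hb_def
  have haT : a ≠ ⊤ := (lt_of_le_of_lt (prob_le_one (μ := μ)) ENNReal.one_lt_top).ne
  have hbT : b ≠ ⊤ := (lt_of_le_of_lt (prob_le_one (μ := ν)) ENNReal.one_lt_top).ne
  have ha1 : a ≤ 1 := prob_le_one (μ := μ)
  have hb1 : b ≤ 1 := prob_le_one (μ := ν)
  have hacompl : μ Aᶜ = 1 - a := by
    rw [measure_compl hA haT, measure_univ]
  have hbcompl : ν Bᶜ = 1 - b := by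
    rw [measure_compl hB hbT, measure_univ]
  have hac0 : μ Aᶜ ≠ 0 := by
    rw [Ne, prob_compl_eq_zero_iff hA]; exact hA1
  have hbc0 : ν Bᶜ ≠ 0 := by
    rw [Ne, prob_compl_eq_zero_iff hB]; exact hB1
  have hacT : μ Aᶜ ≠ ⊤ := (lt_of_le_of_lt (prob_le_one (μ := μ)) ENNReal.one_lt_top).ne
  have hbcT : ν Bᶜ ≠ ⊤ := (lt_of_le_of_lt (prob_le_one (μ := ν)) ENNReal.one_lt_top).ne
  set α : Measure E := a⁻¹ • μ.restrict A with hα_def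
  set α' : Measure E := (μ Aᶜ)⁻¹ • μ.restrict Aᶜ with hα'_def
  set β : Measure E := b⁻¹ • ν.restrict B with hβ_def
  set β' : Measure E := (ν Bᶜ)⁻¹ • ν.restrict Bᶜ with hβ'_def
  haveI hαp : IsProbabilityMeasure α := ⟨by
    rw [hα_def, Measure.smul_apply, Measure.restrict_apply_univ, smul_eq_mul,
      ENNReal.inv_mul_cancel hA0 haT]⟩
  haveI hα'p : IsProbabilityMeasure α' := ⟨by
    rw [hα'_def, Measure.smul_apply, Measure.restrict_apply_univ, smul_eq_mul,
      ENNReal.inv_mul_cancel hac0 hacT]⟩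
  haveI hβp : IsProbabilityMeasure β := ⟨by
    rw [hβ_def, Measure.smul_apply, Measure.restrict_apply_univ, smul_eq_mul,
      ENNReal.inv_mul_cancel hB0 hbT]⟩
  haveI hβ'p : IsProbabilityMeasure β' := ⟨by
    rw [hβ'_def, Measure.smul_apply, Measure.restrict_apply_univ, smul_eq_mul,
      ENNReal.inv_mul_cancel hbc0 hbcT]⟩
  set c := min a b with hc_def
  set w10 := a - c with hw10_def
  set w01 := b - c with hw01_def
  set w00 := μ Aᶜ - w01 with hw00_def
  have hsum1 : c + w10 = a := add_tsub_cancel_of_le (min_le_left a b)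
  have hw01_le : w01 ≤ μ Aᶜ := by
    rw [hacompl, hw01_def, hc_def]
    rcases le_total a b with hab | hba
    · rw [min_eq_left hab]
      exact tsub_le_tsub hb1 le_rfl
    · rw [min_eq_right hba, tsub_self]
      exact zero_le
  have hsum2 : w01 + w00 = μ Aᶜ := add_tsub_cancel_of_le hw01_le
  have hsum3 : c + w01 = b := add_tsub_cancel_of_le (min_le_right a b)
  have hsum4 : w10 + w00 = ν Bᶜ := by
    rw [hbcompl, hw10_def, hw00_def, hw01_def, hacompl, hc_def]
    rcases le_total a b with hab | hba
    · rw [min_eq_left hab, tsub_self, zero_add, tsub_tsub, add_tsub_cancel_of_le hab]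
    · rw [min_eq_right hba, tsub_self, tsub_zero, add_comm,
        tsub_add_tsub_cancel ha1 hba]
  have hαA : α A = 1 := by
    rw [hα_def, Measure.smul_apply, Measure.restrict_apply hA, Set.inter_self, smul_eq_mul,
      ENNReal.inv_mul_cancel hA0 haT]
  have hα'A : α' A = 0 := by
    rw [hα'_def, Measure.smul_apply, Measure.restrict_apply hA, Set.inter_compl_self,
      measure_empty, smul_eq_mul, mul_zero]
  have hβB : β B = 1 := by
    rw [hβ_def, Measure.smul_apply, Measure.restrict_apply hB, Set.inter_self, smul_eq_mul,
      ENNReal.inv_mul_cancel hB0 hbT]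
  have hβ'B : β' B = 0 := by
    rw [hβ'_def, Measure.smul_apply, Measure.restrict_apply hB, Set.inter_compl_self,
      measure_empty, smul_eq_mul, mul_zero]
  have haα : a • α = μ.restrict A := by
    rw [hα_def, smul_smul, ENNReal.mul_inv_cancel hA0 haT, one_smul]
  have hacα : μ Aᶜ • α' = μ.restrict Aᶜ := by
    rw [hα'_def, smul_smul, ENNReal.mul_inv_cancel hac0 hacT, one_smul]
  have hbβ : b • β = ν.restrict B := by
    rw [hβ_def, smul_smul, ENNReal.mul_inv_cancel hB0 hbT, one_smul]
  have hbcβ : ν Bᶜ • β' = ν.restrict Bᶜ := by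
    rw [hβ'_def, smul_smul, ENNReal.mul_inv_cancel hbc0 hbcT, one_smul]
  refine ⟨c • α.prod β + w10 • α.prod β' + w01 • α'.prod β + w00 • α'.prod β', ?_, ?_, ?_, ?_⟩
  · constructor
    simp only [Measure.add_apply, Measure.smul_apply, measure_univ, smul_eq_mul, mul_one]
    calc c + w10 + w01 + w00 = (c + w10) + (w01 + w00) := by ring
    _ = a + μ Aᶜ := by rw [hsum1, hsum2]
    _ = 1 := by rw [ha_def, measure_add_measure_compl hA, measure_univ]
  · rw [Measure.map_add _ _ measurable_fst, Measure.map_add _ _ measurable_fst,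
      Measure.map_add _ _ measurable_fst, Measure.map_smul, Measure.map_smul,
      Measure.map_smul, Measure.map_smul, Measure.map_fst_prod, Measure.map_fst_prod,
      Measure.map_fst_prod, Measure.map_fst_prod]
    simp only [measure_univ, one_smul]
    calc c • α + w10 • α + w01 • α' + w00 • α'
        = (c + w10) • α + (w01 + w00) • α' := by
          rw [add_smul, add_smul]; abel
    _ = a • α + μ Aᶜ • α' := by rw [hsum1, hsum2]
    _ = μ.restrict A + μ.restrict Aᶜ := by rw [haα, hacα]
    _ = μ := Measure.restrict_add_restrict_compl hA
  · rw [Measure.map_add _ _ measurable_snd, Measure.map_add _ _ measurable_snd,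
      Measure.map_add _ _ measurable_snd, Measure.map_smul, Measure.map_smul,
      Measure.map_smul, Measure.map_smul, Measure.map_snd_prod, Measure.map_snd_prod,
      Measure.map_snd_prod, Measure.map_snd_prod]
    simp only [measure_univ, one_smul]
    calc c • β + w10 • β' + w01 • β + w00 • β'
        = (c + w01) • β + (w10 + w00) • β' := by
          rw [add_smul, add_smul]; abel
    _ = b • β + ν Bᶜ • β' := by rw [hsum3, hsum4]
    _ = ν.restrict B + ν.restrict Bᶜ := by rw [hbβ, hbcβ]
    _ = ν := Measure.restrict_add_restrict_compl hB
  · simp only [Measure.add_apply, Measure.smul_apply, Measure.prod_prod, smul_eq_mul]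
    rw [hαA, hα'A, hβB, hβ'B]
    simp [hc_def]

end Aux

section Main

variable {d m : ℕ} [NeZero m]

local notation "E" => EuclideanSpace ℝ (Fin d)

/-- a.e. each "Dirac" coordinate is constant. -/
lemma ae_eq_const_of_marginal_dirac (γ : Measure (Fin m → E)) [IsProbabilityMeasure γ]
    {j : Fin m} {c : E} (h : γ.map (fun x => x j) = Measure.dirac c) :
    ∀ᵐ x ∂γ, x j = c := by
  have hpre : γ ((fun x : Fin m → E => x j) ⁻¹' {c}) = 1 := by
    rw [← Measure.map_apply (measurable_pi_apply j) (measurableSet_singleton c), h]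
    simp
  have hcompl : γ ((fun x : Fin m → E => x j) ⁻¹' {c})ᶜ = 0 := by
    rw [prob_compl_eq_zero_iff ((measurable_pi_apply j) (measurableSet_singleton c))]
    exact hpre
  rw [ae_iff]
  refine measure_mono_null ?_ hcompl
  intro x hx
  simpa using hx

lemma integrable_inner_eval (γ : Measure (Fin m → E)) [IsProbabilityMeasure γ]
    (μ : Fin m → Measure E) (hm : ∀ j, γ.map (fun x => x j) = μ j)
    (hbdd : ∀ j, ∃ R : ℝ, μ j {y : E | ‖y‖ ≤ R}ᶜ = 0) (s t : Fin m) :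
    Integrable (fun x : Fin m → E => ⟪x s, x t⟫) γ := by
  have hb : ∀ j : Fin m, ∃ R : ℝ, 0 ≤ R ∧ ∀ᵐ x ∂γ, ‖x j‖ ≤ R := by
    intro j
    obtain ⟨R, hR⟩ := hbdd j
    refine ⟨max R 0, le_max_right _ _, ?_⟩
    have msC : MeasurableSet ({y : E | ‖y‖ ≤ R}ᶜ) :=
      (isClosed_le continuous_norm continuous_const).measurableSet.compl
    have hpre : γ ((fun x : Fin m → E => x j) ⁻¹' ({y : E | ‖y‖ ≤ R}ᶜ)) = 0 := by
      rw [← Measure.map_apply (measurable_pi_apply j) msC, hm j]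
      exact hR
    rw [ae_iff]
    refine measure_mono_null ?_ hpre
    intro x hx
    simp only [Set.mem_setOf_eq, not_le] at hx
    simp only [Set.mem_preimage, Set.mem_compl_iff, Set.mem_setOf_eq, not_le]
    exact lt_of_lt_of_le (lt_of_le_of_lt (le_max_left R 0) hx) le_rfl
  obtain ⟨Rs, hRs0, hRs⟩ := hb s
  obtain ⟨Rt, hRt0, hRt⟩ := hb t
  refine ⟨?_, HasFiniteIntegral.of_bounded (C := Rs * Rt) ?_⟩
  · exact ((measurable_pi_apply s).inner (measurable_pi_apply t)).aestronglyMeasurable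
  · filter_upwards [hRs, hRt] with x hs ht
    calc ‖(⟪x s, x t⟫ : ℝ)‖ = |⟪x s, x t⟫| := rfl
    _ ≤ ‖x s‖ * ‖x t‖ := abs_real_inner_le_norm _ _
    _ ≤ Rs * Rt := mul_le_mul hs ht (norm_nonneg _) hRs0

/-- Value of the Kantorovich functional: constant over admissible plans. -/
lemma kantorovich_value (G : SimpleGraph (Fin m)) (i : Fin m) (hi : i ≠ 0)
    (hni : ¬ G.Adj 0 i) (μ : Fin m → Measure E)
    (hprob : ∀ j, IsProbabilityMeasure (μ j))
    (hbdd : ∀ j, ∃ R : ℝ, μ j {y : E | ‖y‖ ≤ R}ᶜ = 0)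
    (xbar : Fin m → E) (hdirac : ∀ j, j ≠ 0 → j ≠ i → μ j = Measure.dirac (xbar j))
    (γ : Measure (Fin m → E)) (hγ : IsProbabilityMeasure γ)
    (hm : ∀ j, γ.map (fun x => x j) = μ j) :
    ∫ x, surplus G x ∂γ = ∑ e ∈ G.edgeFinset,
      Sym2.lift ⟨fun s t => ⟪∫ y, y ∂(μ s), ∫ y, y ∂(μ t)⟫,
        fun s t => real_inner_comm _ _⟩ e := by
  haveI := hγ
  -- key per-pair computation
  have key : ∀ s t : Fin m, t ≠ 0 → t ≠ i →
      ∫ x, (⟪x s, x t⟫ : ℝ) ∂γ = ⟪∫ y, y ∂(μ s), ∫ y, y ∂(μ t)⟫ := by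
    intro s t ht0 hti
    have hdt : μ t = Measure.dirac (xbar t) := hdirac t ht0 hti
    have hmean_t : (∫ y, y ∂(μ t)) = xbar t := by
      rw [hdt, integral_dirac]
    have hae : ∀ᵐ x ∂γ, x t = xbar t :=
      ae_eq_const_of_marginal_dirac γ (by rw [hm t, hdt])
    have h1 : ∫ x, (⟪x s, x t⟫ : ℝ) ∂γ = ∫ x, (⟪x s, xbar t⟫ : ℝ) ∂γ := by
      refine integral_congr_ae ?_
      filter_upwards [hae] with x hx
      rw [hx]
    rw [h1, hmean_t]
    have h2 : ∫ x, (⟪x s, xbar t⟫ : ℝ) ∂γ = ∫ z, (⟪z, xbar t⟫ : ℝ) ∂(μ s) := by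
      rw [← hm s, integral_map (measurable_pi_apply s).aemeasurable]
      exact (continuous_inner.comp (continuous_id.prodMk continuous_const))
        |>.aestronglyMeasurable
    rw [h2]
    obtain ⟨R, hR⟩ := hbdd s
    haveI := hprob s
    have hint : Integrable (fun y : E => y) (μ s) := integrable_id_of_bdd (μ s) hR
    calc ∫ z, (⟪z, xbar t⟫ : ℝ) ∂(μ s) = ∫ z, (⟪xbar t, z⟫ : ℝ) ∂(μ s) := by
          simp_rw [real_inner_comm]
    _ = ⟪xbar t, ∫ y, y ∂(μ s)⟫ := integral_inner hint (xbar t)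
    _ = ⟪∫ y, y ∂(μ s), xbar t⟫ := real_inner_comm _ _
  unfold surplus
  rw [integral_finset_sum]
  · refine Finset.sum_congr rfl fun e he => ?_
    induction e using Sym2.ind with
    | _ s t =>
      rw [SimpleGraph.mem_edgeFinset, SimpleGraph.mem_edgeSet] at he
      simp only [Sym2.lift_mk]
      by_cases ht : t ≠ 0 ∧ t ≠ i
      · exact key s t ht.1 ht.2
      · -- t = 0 or t = i; then s ∉ {0, i}
        have hs0 : s ≠ 0 := by
          rintro rfl
          rcases not_and_or.1 ht with h0 | hi'
          · push_neg at h0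
            exact G.loopless.irrefl 0 (h0 ▸ he)
          · push_neg at hi'
            exact hni (hi' ▸ he)
        have hsi : s ≠ i := by
          rintro rfl
          rcases not_and_or.1 ht with h0 | hi'
          · push_neg at h0
            exact hni (G.adj_symm (h0 ▸ he))
          · push_neg at hi'
            exact G.loopless.irrefl _ (hi' ▸ he)
        have := key t s hs0 hsi
        calc ∫ x, (⟪x s, x t⟫ : ℝ) ∂γ = ∫ x, (⟪x t, x s⟫ : ℝ) ∂γ := by
              simp_rw [real_inner_comm]
        _ = ⟪∫ y, y ∂(μ t), ∫ y, y ∂(μ s)⟫ := this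
        _ = _ := real_inner_comm _ _
  · intro e he
    induction e using Sym2.ind with
    | _ s t =>
      simp only [Sym2.lift_mk]
      exact integrable_inner_eval γ μ hm hbdd s t

end Main

/-- If `{v₁, v_i}` is not an edge of `G` and all marginals except `μ₁` and `μᵢ` are Dirac
masses, then the Kantorovich functional is constant on the set of admissible couplings;
consequently, if moreover `μ₁` is absolutely continuous and `μᵢ` is not a Dirac mass, there
exist two distinct optimal couplings, one of which is not of Monge form. -/
theorem nonMonge_of_missing_edge_and_diracs {d m : ℕ} [NeZero m]
    (G : SimpleGraph (Fin m)) (i : Fin m) (hi : i ≠ 0) (hni : ¬ G.Adj 0 i)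
    (μ : Fin m → Measure (EuclideanSpace ℝ (Fin d)))
    (hprob : ∀ j, IsProbabilityMeasure (μ j))
    (hbdd : ∀ j, ∃ R : ℝ, μ j {y | ‖y‖ ≤ R}ᶜ = 0)
    (xbar : Fin m → EuclideanSpace ℝ (Fin d))
    (hdirac : ∀ j, j ≠ 0 → j ≠ i → μ j = Measure.dirac (xbar j)) :
    (∀ γ₁ γ₂ : Measure (Fin m → EuclideanSpace ℝ (Fin d)),
        IsProbabilityMeasure γ₁ → IsProbabilityMeasure γ₂ →
        (∀ j, γ₁.map (fun x => x j) = μ j) → (∀ j, γ₂.map (fun x => x j) = μ j) →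
        ∫ x, surplus G x ∂γ₁ = ∫ x, surplus G x ∂γ₂) ∧
    (μ 0 ≪ (volume : Measure (EuclideanSpace ℝ (Fin d))) →
      (∀ p : EuclideanSpace ℝ (Fin d), μ i ≠ Measure.dirac p) →
      ∃ γ₁ γ₂ : Measure (Fin m → EuclideanSpace ℝ (Fin d)),
        IsProbabilityMeasure γ₁ ∧ IsProbabilityMeasure γ₂ ∧
        (∀ j, γ₁.map (fun x => x j) = μ j) ∧ (∀ j, γ₂.map (fun x => x j) = μ j) ∧
        (∀ γ' : Measure (Fin m → EuclideanSpace ℝ (Fin d)), IsProbabilityMeasure γ' →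
          (∀ j, γ'.map (fun x => x j) = μ j) →
          ∫ x, surplus G x ∂γ' ≤ ∫ x, surplus G x ∂γ₁) ∧
        (∀ γ' : Measure (Fin m → EuclideanSpace ℝ (Fin d)), IsProbabilityMeasure γ' →
          (∀ j, γ'.map (fun x => x j) = μ j) →
          ∫ x, surplus G x ∂γ' ≤ ∫ x, surplus G x ∂γ₂) ∧
        γ₁ ≠ γ₂ ∧
        ¬ ∃ T : Fin m → EuclideanSpace ℝ (Fin d) → EuclideanSpace ℝ (Fin d),
            (∀ j, Measurable (T j)) ∧ γ₁ {x | ∀ j, x j = T j (x 0)} = 1) := by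
  classical
  have value := fun (γ : Measure (Fin m → EuclideanSpace ℝ (Fin d)))
      (hγ : IsProbabilityMeasure γ) (hmm : ∀ j, γ.map (fun x => x j) = μ j) =>
    kantorovich_value G i hi hni μ hprob hbdd xbar hdirac γ hγ hmm
  constructor
  · intro γ₁ γ₂ h1 h2 hm1 hm2
    rw [value γ₁ h1 hm1, value γ₂ h2 hm2]
  · intro hac hnd
    haveI := hprob 0
    haveI := hprob i
    -- dimension must be positive
    rcases Nat.eq_zero_or_pos d with hd | hd
    · exfalso
      subst hd
      haveI : Subsingleton (EuclideanSpace ℝ (Fin 0)) :=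
        ⟨fun a b => PiLp.ext fun k => Fin.elim0 k⟩
      refine hnd 0 (eq_dirac_of_singleton_full (μ i) ?_)
      have : ({(0 : EuclideanSpace ℝ (Fin 0))} : Set _) = Set.univ :=
        Set.eq_univ_of_forall fun x => by simp [Subsingleton.elim x 0]
      rw [this, measure_univ]
    -- μ 0 is not a Dirac mass
    have h0nd : ∀ p : EuclideanSpace ℝ (Fin d), μ 0 ≠ Measure.dirac p := by
      intro p hp
      have hvol : (volume : Measure (EuclideanSpace ℝ (Fin d))) {p} = 0 := by
        haveI : NeZero d := ⟨hd.ne'⟩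
        exact measure_singleton p
      have h0 : μ 0 {p} = 0 := hac hvol
      rw [hp] at h0
      simp at h0
    obtain ⟨A, hA, hA0, hA1⟩ := exists_set_of_not_dirac (μ 0) h0nd
    obtain ⟨B, hB, hB0, hB1⟩ := exists_set_of_not_dirac (μ i) hnd
    obtain ⟨σ, hσp, hσf, hσs, hσAB⟩ :=
      exists_min_coupling (μ 0) (μ i) hA hB hA0.ne' hA1.ne hB0.ne' hB1.ne
    set L : EuclideanSpace ℝ (Fin d) × EuclideanSpace ℝ (Fin d) →
        (Fin m → EuclideanSpace ℝ (Fin d)) :=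
      fun p j => if j = 0 then p.1 else if j = i then p.2 else xbar j with hL_def
    have hL : Measurable L := by
      refine measurable_pi_lambda _ fun j => ?_
      by_cases hj0 : j = 0
      · simpa [hL_def, hj0] using measurable_fst
      · by_cases hji : j = i
        · simpa [hL_def, hj0, hji, hi] using measurable_snd
        · simpa [hL_def, hj0, hji] using measurable_const
    have hL0 : ∀ p, L p 0 = p.1 := fun p => by simp [hL_def]
    have hLi : ∀ p, L p i = p.2 := fun p => by simp [hL_def, hi]
    -- marginals of a lifted coupling
    have hmarg : ∀ ρ : Measure (EuclideanSpace ℝ (Fin d) × EuclideanSpace ℝ (Fin d)),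
        IsProbabilityMeasure ρ → ρ.map Prod.fst = μ 0 → ρ.map Prod.snd = μ i →
        ∀ j, (ρ.map L).map (fun x => x j) = μ j := by
      intro ρ hρ hf hs j
      rw [Measure.map_map (measurable_pi_apply j) hL]
      by_cases hj0 : j = 0
      · subst hj0
        have : ((fun x : Fin m → EuclideanSpace ℝ (Fin d) => x 0) ∘ L) = Prod.fst :=
          funext fun p => hL0 p
        rw [this, hf]
      · by_cases hji : j = i
        · subst hji
          have : ((fun x : Fin m → EuclideanSpace ℝ (Fin d) => x j) ∘ L) = Prod.snd :=
            funext fun p => hLi p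
          rw [this, hs]
        · have : ((fun x : Fin m → EuclideanSpace ℝ (Fin d) => x j) ∘ L)
              = fun _ => xbar j := funext fun p => by simp [hL_def, hj0, hji]
          rw [this, Measure.map_const, measure_univ, one_smul, hdirac j hj0 hji]
    set π := (μ 0).prod (μ i) with hπ_def
    haveI hπp : IsProbabilityMeasure π := by rw [hπ_def]; infer_instance
    have hπf : π.map Prod.fst = μ 0 := by
      rw [hπ_def, Measure.map_fst_prod, measure_univ, one_smul]
    have hπs : π.map Prod.snd = μ i := by
      rw [hπ_def, Measure.map_snd_prod, measure_univ, one_smul]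
    refine ⟨π.map L, σ.map L, Measure.isProbabilityMeasure_map hL.aemeasurable,
      Measure.isProbabilityMeasure_map hL.aemeasurable, hmarg π hπp hπf hπs,
      hmarg σ hσp hσf hσs, ?_, ?_, ?_, ?_⟩
    · intro γ' hγ' hm'
      rw [value γ' hγ' hm', value (π.map L) (Measure.isProbabilityMeasure_map hL.aemeasurable)
        (hmarg π hπp hπf hπs)]
    · intro γ' hγ' hm'
      rw [value γ' hγ' hm', value (σ.map L) (Measure.isProbabilityMeasure_map hL.aemeasurable)
        (hmarg σ hσp hσf hσs)]
    · -- the two couplings differ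
      intro heq
      set S : Set (Fin m → EuclideanSpace ℝ (Fin d)) :=
        (fun x : Fin m → EuclideanSpace ℝ (Fin d) => x 0) ⁻¹' A ∩
          (fun x : Fin m → EuclideanSpace ℝ (Fin d) => x i) ⁻¹' B with hS_def
      have hSmeas : MeasurableSet S :=
        ((measurable_pi_apply 0) hA).inter ((measurable_pi_apply i) hB)
      have hpre : L ⁻¹' S = A ×ˢ B := by
        ext p
        simp [hS_def, hL0, hLi, Set.mem_prod]
      have h1 : (π.map L) S = μ 0 A * μ i B := by
        rw [Measure.map_apply hL hSmeas, hpre, hπ_def, Measure.prod_prod]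
      have h2 : (σ.map L) S = min (μ 0 A) (μ i B) := by
        rw [Measure.map_apply hL hSmeas, hpre, hσAB]
      have hne : μ 0 A * μ i B ≠ min (μ 0 A) (μ i B) := by
        have haT : μ 0 A ≠ ⊤ := (lt_of_le_of_lt (prob_le_one (μ := μ 0))
          ENNReal.one_lt_top).ne
        have hbT : μ i B ≠ ⊤ := (lt_of_le_of_lt (prob_le_one (μ := μ i))
          ENNReal.one_lt_top).ne
        rcases le_total (μ 0 A) (μ i B) with hab | hba
        · rw [min_eq_left hab]
          refine ne_of_lt ?_
          calc μ 0 A * μ i B < μ 0 A * 1 := by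
                exact ENNReal.mul_lt_mul_right hA0.ne' haT hB1
          _ = μ 0 A := mul_one _
        · rw [min_eq_right hba]
          refine ne_of_lt ?_
          calc μ 0 A * μ i B < 1 * μ i B := by
                exact ENNReal.mul_lt_mul_left hB0.ne' hbT hA1
          _ = μ i B := one_mul _
      exact hne (by rw [← h1, heq, h2])
    · -- γ₁ is not of Monge form
      rintro ⟨T, hTm, hT1⟩
      set s : Set (EuclideanSpace ℝ (Fin d) × EuclideanSpace ℝ (Fin d)) :=
        {p | p.2 = T i p.1} with hs_def
      have hsmeas : MeasurableSet s :=
        measurableSet_eq_fun measurable_snd ((hTm i).comp measurable_fst)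
      have hS'meas : MeasurableSet {x : Fin m → EuclideanSpace ℝ (Fin d) |
          x i = T i (x 0)} :=
        measurableSet_eq_fun (measurable_pi_apply i)
          ((hTm i).comp (measurable_pi_apply 0))
      have hsub : {x : Fin m → EuclideanSpace ℝ (Fin d) | ∀ j, x j = T j (x 0)} ⊆
          {x | x i = T i (x 0)} := fun x hx => hx i
      have hS'1 : (π.map L) {x : Fin m → EuclideanSpace ℝ (Fin d) |
          x i = T i (x 0)} = 1 := by
        refine le_antisymm (prob_le_one (μ := π.map L)) ?_
        rw [← hT1]
        exact measure_mono hsub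
      have hpre' : L ⁻¹' {x : Fin m → EuclideanSpace ℝ (Fin d) | x i = T i (x 0)} = s := by
        ext p
        simp [hs_def, hL0, hLi]
      have hset : ∀ x, (Prod.mk x ⁻¹' s) = {T i x} := fun x => by
        ext y; simp [hs_def]
      have hlin : ∫⁻ x, μ i {T i x} ∂(μ 0) = 1 := by
        have h := hS'1
        rw [Measure.map_apply hL hS'meas, hpre', hπ_def, Measure.prod_apply hsmeas] at h
        rw [← h]
        exact lintegral_congr fun x => by rw [hset x]
      have hfmeas : Measurable fun x => μ i {T i x} := by
        have h := measurable_measure_prodMk_left (ν := μ i) hsmeas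
        simpa only [hset] using h
      have hfle : ∀ x, μ i {T i x} ≤ 1 := fun x => prob_le_one (μ := μ i)
      have hzero : ∫⁻ x, (1 - μ i {T i x}) ∂(μ 0) = 0 := by
        rw [lintegral_sub hfmeas (by rw [hlin]; exact ENNReal.one_ne_top)
          (Filter.Eventually.of_forall hfle), hlin, lintegral_one, measure_univ, tsub_self]
      have hae : ∀ᵐ x ∂(μ 0), μ i {T i x} = 1 := by
        have := (lintegral_eq_zero_iff (measurable_const.sub hfmeas)).1 hzero
        filter_upwards [this] with x hx
        have : (1 : ENNReal) - μ i {T i x} = 0 := hx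
        exact le_antisymm (hfle x) (tsub_eq_zero_iff_le.1 this)
      haveI : (ae (μ 0)).NeBot := ae_neBot.2 (IsProbabilityMeasure.ne_zero (μ 0))
      obtain ⟨x, hx⟩ := hae.exists
      exact hnd (T i x) (eq_dirac_of_singleton_full (μ i) hx)
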